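/- For 2N×2N matrices: if D is an antisymmetric matrix and E is any square matrix of the same size, then Pf(E D Eᵀ) = Pf(D) · det(E). -/
import Mathlib


open Matrix BigOperators

/-- The Pfaffian of a `2n × 2n` matrix over `ℝ`, defined by the standard
sum over all permutations with a `1/(2^n n!)` normalization. -/
noncomputable def Pf {n : ℕ} (A : Matrix (Fin (2 * n)) (Fin (2 * n)) ℝ) : ℝ :=
  (1 / (2 ^ n * (n.factorial : ℝ))) *
    ∑ σ : Equiv.Perm (Fin (2 * n)),
      ((Equiv.Perm.sign σ : ℤ) : ℝ) *
        ∏ i : Fin n,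
          A (σ ⟨2 * i.val, by have := i.isLt; omega⟩)
            (σ ⟨2 * i.val + 1, by have := i.isLt; omega⟩)

namespace PfConjAux

variable {N : ℕ}

/-- index `2i` -/
def e0 (i : Fin N) : Fin (2 * N) := ⟨2 * i.val, by have := i.isLt; omega⟩
/-- index `2i+1` -/
def e1 (i : Fin N) : Fin (2 * N) := ⟨2 * i.val + 1, by have := i.isLt; omega⟩

def pairEquiv (N : ℕ) : Fin N × Fin 2 ≃ Fin (2 * N) where
  toFun p := ⟨2 * p.1.val + p.2.val, by have := p.1.isLt; have := p.2.isLt; omega⟩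
  invFun k := (⟨k.val / 2, by have := k.isLt; omega⟩, ⟨k.val % 2, by omega⟩)
  left_inv p := by
    obtain ⟨⟨a, ha⟩, ⟨b, hb⟩⟩ := p
    simp only [Prod.mk.injEq, Fin.mk.injEq]
    omega
  right_inv k := by
    apply Fin.ext
    simp only
    omega

lemma prod_pairs (f : Fin (2 * N) → ℝ) :
    ∏ k, f k = ∏ i : Fin N, f (e0 i) * f (e1 i) := by
  rw [← Equiv.prod_comp (pairEquiv N) f, Fintype.prod_prod_type]
  refine Finset.prod_congr rfl fun i _ => ?_
  rw [Fin.prod_univ_two]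
  have h0 : pairEquiv N (i, 0) = e0 i := by apply Fin.ext; simp [pairEquiv, e0]
  have h1 : pairEquiv N (i, 1) = e1 i := by apply Fin.ext; simp [pairEquiv, e1]
  rw [h0, h1]

/-- Bijection between functions `ψ` and the data `(g i) = (ψ (σ (2i)), ψ (σ (2i+1)))`. -/
def psiEquiv (σ : Equiv.Perm (Fin (2 * N))) :
    (Fin (2 * N) → Fin (2 * N)) ≃ (Fin N → Fin (2 * N) × Fin (2 * N)) where
  toFun ψ i := (ψ (σ (e0 i)), ψ (σ (e1 i)))
  invFun g k :=
    if (σ.symm k).val % 2 = 0 then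
      (g ⟨(σ.symm k).val / 2, by have := (σ.symm k).isLt; omega⟩).1
    else
      (g ⟨(σ.symm k).val / 2, by have := (σ.symm k).isLt; omega⟩).2
  left_inv ψ := by
    funext k
    by_cases h : (σ.symm k).val % 2 = 0
    · simp only [h, if_true]
      have he : e0 ⟨(σ.symm k).val / 2, by have := (σ.symm k).isLt; omega⟩ = σ.symm k := by
        apply Fin.ext; simp only [e0]; omega
      rw [he, Equiv.apply_symm_apply]
    · simp only [h, if_false]
      have he : e1 ⟨(σ.symm k).val / 2, by have := (σ.symm k).isLt; omega⟩ = σ.symm k := by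
        apply Fin.ext; simp only [e1]; omega
      rw [he, Equiv.apply_symm_apply]
  right_inv g := by
    funext i
    simp only [Equiv.symm_apply_apply]
    rw [if_pos (by simp only [e0]; omega), if_neg (by simp only [e1]; omega)]
    have h0 : (⟨(e0 i).val / 2, by have := (e0 i).isLt; omega⟩ : Fin N) = i := by
      apply Fin.ext; simp only [e0]; omega
    have h1 : (⟨(e1 i).val / 2, by have := (e1 i).isLt; omega⟩ : Fin N) = i := by
      apply Fin.ext; simp only [e1]; omega
    rw [h0, h1]

/-- The inner permutation sum attached to a function `ψ`. -/
noncomputable def inn (D : Matrix (Fin (2 * N)) (Fin (2 * N)) ℝ)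
    (ψ : Fin (2 * N) → Fin (2 * N)) : ℝ :=
  ∑ σ : Equiv.Perm (Fin (2 * N)),
    ((Equiv.Perm.sign σ : ℤ) : ℝ) * ∏ i : Fin N, D (ψ (σ (e0 i))) (ψ (σ (e1 i)))

lemma inn_eq_zero (D : Matrix (Fin (2 * N)) (Fin (2 * N)) ℝ)
    (ψ : Fin (2 * N) → Fin (2 * N)) (hψ : ¬ Function.Injective ψ) :
    inn D ψ = 0 := by
  rw [Function.Injective] at hψ
  push_neg at hψ
  obtain ⟨p, q, hpq, hne⟩ := hψ
  have hs : ∀ x, ψ (Equiv.swap p q x) = ψ x := by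
    intro x
    rcases eq_or_ne x p with rfl | hxp
    · rw [Equiv.swap_apply_left, hpq]
    rcases eq_or_ne x q with rfl | hxq
    · rw [Equiv.swap_apply_right, hpq]
    · rw [Equiv.swap_apply_of_ne_of_ne hxp hxq]
  refine Finset.sum_ninvolution (fun σ => Equiv.swap p q * σ) ?_ ?_
    (fun _ => Finset.mem_univ _) ?_
  · intro σ
    have hsign : Equiv.Perm.sign (Equiv.swap p q * σ) = - Equiv.Perm.sign σ := by
      rw [Equiv.Perm.sign_mul, Equiv.Perm.sign_swap hne, neg_one_mul]
    simp only [Equiv.Perm.mul_apply, hs, hsign, Units.val_neg, Int.cast_neg]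
    ring
  · intro σ _ hc
    have hc' : Equiv.swap p q * σ = σ := hc
    have : Equiv.swap p q = 1 := by
      have h1 : Equiv.swap p q * σ = 1 * σ := by rw [hc', one_mul]
      exact mul_right_cancel h1
    exact hne (Equiv.swap_eq_one_iff.mp this)
  · intro σ
    show Equiv.swap p q * (Equiv.swap p q * σ) = σ
    rw [← mul_assoc, Equiv.swap_mul_self, one_mul]

lemma inn_perm (D : Matrix (Fin (2 * N)) (Fin (2 * N)) ℝ)
    (π : Equiv.Perm (Fin (2 * N))) :
    inn D ⇑π = ((Equiv.Perm.sign π : ℤ) : ℝ) *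
      ∑ τ : Equiv.Perm (Fin (2 * N)),
        ((Equiv.Perm.sign τ : ℤ) : ℝ) * ∏ i : Fin N, D (τ (e0 i)) (τ (e1 i)) := by
  rw [inn, Finset.mul_sum]
  refine Fintype.sum_equiv (Equiv.mulLeft π) _ _ fun σ => ?_
  have h1 : (Equiv.Perm.sign π) * (Equiv.Perm.sign (π * σ)) = Equiv.Perm.sign σ := by
    rw [Equiv.Perm.sign_mul, ← mul_assoc, Int.units_mul_self, one_mul]
  have h2 : ((Equiv.Perm.sign π : ℤ) : ℝ) * ((Equiv.Perm.sign (π * σ) : ℤ) : ℝ)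
      = ((Equiv.Perm.sign σ : ℤ) : ℝ) := by
    rw [← Int.cast_mul, ← Units.val_mul, h1]
  simp only [Equiv.coe_mulLeft, Equiv.Perm.mul_apply, ← h2]
  ring

end PfConjAux

open PfConjAux in
/-- If `D` is antisymmetric and `E` arbitrary (both `2N × 2N`), then
`Pf (E D Eᵀ) = Pf D · det E`. -/
theorem pf_conj_transpose {N : ℕ} (D E : Matrix (Fin (2 * N)) (Fin (2 * N)) ℝ)
    (hD : Dᵀ = -D) :
    Pf (E * D * Eᵀ) = Pf D * E.det := by
  classical
  set c : ℝ := 1 / (2 ^ N * (N.factorial : ℝ)) with hc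
  set S : ℝ := ∑ τ : Equiv.Perm (Fin (2 * N)),
      ((Equiv.Perm.sign τ : ℤ) : ℝ) * ∏ i : Fin N, D (τ (e0 i)) (τ (e1 i)) with hS
  have hPfD : Pf D = c * S := rfl
  have entry : ∀ x y, (E * D * Eᵀ) x y =
      ∑ p : Fin (2 * N) × Fin (2 * N), E x p.1 * D p.1 p.2 * E y p.2 := by
    intro x y
    rw [Fintype.sum_prod_type]
    simp only [Matrix.mul_apply, Matrix.transpose_apply, Finset.sum_mul]
    rw [Finset.sum_comm]
  -- step 1: expand the product over matrix entries into a sum over functions ψ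
  have step1 : ∀ σ : Equiv.Perm (Fin (2 * N)),
      ∏ i : Fin N, (E * D * Eᵀ) (σ (e0 i)) (σ (e1 i))
      = ∑ ψ : Fin (2 * N) → Fin (2 * N),
          (∏ k, E k (ψ k)) * ∏ i : Fin N, D (ψ (σ (e0 i))) (ψ (σ (e1 i))) := by
    intro σ
    simp only [entry]
    rw [Finset.prod_univ_sum (fun _ : Fin N => (Finset.univ : Finset (Fin (2 * N) × Fin (2 * N))))
      (fun i p => E (σ (e0 i)) p.1 * D p.1 p.2 * E (σ (e1 i)) p.2), Fintype.piFinset_univ]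
    rw [← Equiv.sum_comp (psiEquiv σ)
      (fun g => ∏ i : Fin N, E (σ (e0 i)) (g i).1 * D (g i).1 (g i).2 * E (σ (e1 i)) (g i).2)]
    refine Finset.sum_congr rfl fun ψ _ => ?_
    show ∏ i : Fin N,
        E (σ (e0 i)) (ψ (σ (e0 i))) * D (ψ (σ (e0 i))) (ψ (σ (e1 i))) * E (σ (e1 i)) (ψ (σ (e1 i)))
      = _
    have hsplit : ∏ i : Fin N,
        E (σ (e0 i)) (ψ (σ (e0 i))) * D (ψ (σ (e0 i))) (ψ (σ (e1 i))) * E (σ (e1 i)) (ψ (σ (e1 i)))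
        = (∏ i : Fin N, E (σ (e0 i)) (ψ (σ (e0 i))) * E (σ (e1 i)) (ψ (σ (e1 i)))) *
          ∏ i : Fin N, D (ψ (σ (e0 i))) (ψ (σ (e1 i))) := by
      rw [← Finset.prod_mul_distrib]
      exact Finset.prod_congr rfl fun i _ => by ring
    rw [hsplit]
    congr 1
    have hpp := prod_pairs (fun j => E (σ j) (ψ (σ j)))
    rw [← hpp, Equiv.prod_comp σ (fun k => E k (ψ k))]
  have key : Pf (E * D * Eᵀ) =
      c * ∑ ψ : Fin (2 * N) → Fin (2 * N), (∏ k, E k (ψ k)) * inn D ψ := by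
    have hPf : Pf (E * D * Eᵀ) = c * ∑ σ : Equiv.Perm (Fin (2 * N)),
        ((Equiv.Perm.sign σ : ℤ) : ℝ) *
          ∏ i : Fin N, (E * D * Eᵀ) (σ (e0 i)) (σ (e1 i)) := rfl
    rw [hPf]
    congr 1
    simp only [step1]
    simp_rw [Finset.mul_sum]
    rw [Finset.sum_comm]
    refine Finset.sum_congr rfl fun ψ _ => ?_
    rw [inn, Finset.mul_sum]
    exact Finset.sum_congr rfl fun σ _ => by ring
  -- step 2: only injective ψ (i.e. permutations) contribute
  have drop : ∑ ψ : Fin (2 * N) → Fin (2 * N), (∏ k, E k (ψ k)) * inn D ψ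
      = ∑ σ : Equiv.Perm (Fin (2 * N)), (∏ k, E k (σ k)) * inn D ⇑σ := by
    rw [← Finset.sum_filter_of_ne
      (p := fun ψ : Fin (2 * N) → Fin (2 * N) => Function.Injective ψ)
      (fun ψ _ h => by
        by_contra hinj
        exact h (by rw [inn_eq_zero D ψ hinj, mul_zero]))]
    refine Finset.sum_nbij'
      (fun ψ => if h : Function.Injective ψ then
        Equiv.ofBijective ψ (Finite.injective_iff_bijective.mp h) else 1)
      (fun σ => ⇑σ) (fun _ _ => Finset.mem_univ _) ?_ ?_ ?_ ?_
    · intro σ _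
      exact Finset.mem_filter.mpr ⟨Finset.mem_univ _, Equiv.injective σ⟩
    · intro ψ hψ
      have h := (Finset.mem_filter.mp hψ).2
      simp only [dif_pos h]
      rfl
    · intro σ _
      simp only [dif_pos (Equiv.injective σ)]
      exact Equiv.ext fun x => rfl
    · intro ψ hψ
      have h := (Finset.mem_filter.mp hψ).2
      simp only [dif_pos h]
      rfl
  rw [key, drop, hPfD]
  have hdet : ∑ σ : Equiv.Perm (Fin (2 * N)),
      ((Equiv.Perm.sign σ : ℤ) : ℝ) * ∏ k, E k (σ k) = E.det := by
    rw [← Matrix.det_transpose E, Matrix.det_apply']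
    exact Finset.sum_congr rfl fun σ _ => by simp [Matrix.transpose_apply]
  rw [← hdet, Finset.mul_sum, Finset.mul_sum]
  refine Finset.sum_congr rfl fun σ _ => ?_
  rw [inn_perm, ← hS]
  ring
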